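/- Let G be a finite simple graph with ivs_χ(G) > vs_χ(G), 2·χ(G) ≥ Δ(G) + 2 and |V(G)| = 9. Then ivs_χ(G) = 3, vs_χ(G) = 2 and χ(G) = 3. -/

import Mathlib

/-- The chromatic number of `G` as a natural number. -/
noncomputable def chi {V : Type*} [Fintype V] (G : SimpleGraph V) : ℕ :=
  G.chromaticNumber.toNat

/-- The maximum degree of `G` (classical version, no decidability assumptions). -/
noncomputable def maxDeg {V : Type*} [Fintype V] (G : SimpleGraph V) : ℕ :=
  @SimpleGraph.maxDegree V G _ (Classical.decRel _)

/-- The degree of a vertex `v` of `G` (classical version). -/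
noncomputable def deg {V : Type*} [Fintype V] (G : SimpleGraph V) (v : V) : ℕ :=
  @SimpleGraph.degree V G v (@SimpleGraph.neighborSetFintype V G _ (Classical.decRel _) v)

/-- The chromatic vertex stability of `G`: the minimum size of a set `S` of vertices
such that the subgraph induced on the complement of `S` has chromatic number `χ(G) - 1`. -/
noncomputable def vsChi {V : Type*} [Fintype V] [DecidableEq V] (G : SimpleGraph V) : ℕ :=
  sInf {n : ℕ | ∃ S : Finset V, S.card = n ∧
    chi (G.induce (↑(Sᶜ) : Set V)) = chi G - 1}

/-- The independent chromatic vertex stability of `G`: the minimum size of an independent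
set `S` of vertices such that the subgraph induced on the complement of `S` has chromatic
number `χ(G) - 1`. -/
noncomputable def ivsChi {V : Type*} [Fintype V] [DecidableEq V] (G : SimpleGraph V) : ℕ :=
  sInf {n : ℕ | ∃ S : Finset V, S.card = n ∧
    (∀ x ∈ S, ∀ y ∈ S, ¬ G.Adj x y) ∧
    chi (G.induce (↑(Sᶜ) : Set V)) = chi G - 1}

/-!
A smallest colour class of an optimal colouring is an independent set whose removal lowers
`χ`, so `ivs_χ · χ ≤ |V| = 9`. A set of at most one vertex is independent, hence `vs_χ ≥ 2`,
`ivs_χ ≥ 3` and `χ ≤ 3`. If `χ = 1` the graph is edgeless and `ivs_χ = vs_χ`. If `χ = 2`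
then `Δ ≤ 2`, the sets whose removal lowers `χ` are the proper vertex covers, and a bipartite
graph of maximum degree at most two has an independent minimum vertex cover, so again
`ivs_χ ≤ vs_χ`. Thus `χ = 3`, and `3 ≤ ivs_χ ≤ 9 / 3` pins down both stability numbers.
-/

open SimpleGraph Finset

namespace SimpleGraph

variable {V : Type*} {G : SimpleGraph V}

lemma induce_eq_bot_iff {s : Set V} :
    G.induce s = ⊥ ↔ G.IsIndepSet s := by
  simp only [eq_bot_iff_forall_not_adj, isIndepSet_iff, Set.Pairwise, comap_adj,
    Function.Embedding.subtype_apply, Subtype.forall]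
  exact ⟨fun h a ha b hb _ => h a ha b hb, fun h a ha b hb hab => h ha hb (G.ne_of_adj hab) hab⟩

lemma IsVertexCover.of_erase_subset [DecidableEq V] {S T : Finset V} {x : V}
    (hS : G.IsVertexCover ↑S) (hST : S.erase x ⊆ T) (hx : ∀ w, G.Adj x w → w ∈ T) :
    G.IsVertexCover ↑T := by
  have key : ∀ ⦃u v⦄, G.Adj u v → u ∈ S → u ∈ T ∨ v ∈ T := fun u v huv hu => by
    by_cases hux : u = x
    · exact .inr (hx v (hux ▸ huv))
    · exact .inl (hST (mem_erase.mpr ⟨hux, hu⟩))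
  intro u v huv
  rcases hS huv with hu | hv
  · exact key huv hu
  · exact (key huv.symm hv).symm

lemma IsVertexCover.exists_adj_notMem_of_not_erase [DecidableEq V] {S : Finset V} {x : V}
    (hS : G.IsVertexCover ↑S) (hx : ¬ G.IsVertexCover ↑(S.erase x)) :
    ∃ w, G.Adj x w ∧ w ∉ S := by
  by_contra! h
  exact hx <| hS.of_erase_subset subset_rfl fun w hw =>
    mem_erase.mpr ⟨G.ne_of_adj hw.symm, h w hw⟩

lemma eq_or_eq_of_adj_of_maxDegree_le_two [Fintype V] [DecidableRel G.Adj]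
    (hΔ : G.maxDegree ≤ 2) {x y z w : V} (hyz : y ≠ z)
    (hy : G.Adj x y) (hz : G.Adj x z) (hw : G.Adj x w) : w = y ∨ w = z := by
  classical
  by_contra! h
  have hsub : {y, z, w} ⊆ G.neighborFinset x := by simp [insert_subset_iff, hy, hz, hw]
  have := (card_le_card hsub).trans ((G.card_neighborFinset_eq_degree x).trans_le
    ((G.degree_le_maxDegree x).trans hΔ))
  rw [card_eq_three.mpr ⟨y, z, w, hyz, h.1.symm, h.2.symm, rfl⟩] at this
  omega

/-- Among the minimum vertex covers take one with the most vertices of colour `1`; if it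
contained an edge, trading the colour-`0` endpoint for its private neighbour would be a
better choice. -/
theorem exists_isIndepSet_isVertexCover_card_eq [Fintype V] [DecidableEq V] [DecidableRel G.Adj]
    (hΔ : G.maxDegree ≤ 2) (hG : G.Colorable 2) {S : Finset V} (hS : G.IsVertexCover ↑S)
    (hmin : ∀ T : Finset V, G.IsVertexCover ↑T → #S ≤ #T) :
    ∃ T : Finset V, G.IsIndepSet ↑T ∧ G.IsVertexCover ↑T ∧ #T = #S := by
  classical
  obtain ⟨C⟩ := hG
  obtain ⟨T, hT, hmax⟩ := exists_max_image {T : Finset V | G.IsVertexCover ↑T ∧ #T = #S}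
    (fun T => #{v ∈ T | C v = 1}) ⟨S, by simp [hS]⟩
  simp only [mem_filter, mem_univ, true_and] at hT hmax
  have key : ∀ x ∈ T, ∀ y ∈ T, G.Adj x y → C x = 1 := by
    intro x hx y hy hxy
    by_contra hx1
    obtain ⟨x', hxx', hx'T⟩ := hT.1.exists_adj_notMem_of_not_erase (x := x) fun h => by
      have := hmin _ h
      have := card_erase_lt_of_mem hx
      omega
    have hx'1 : C x' = 1 := by have := C.valid hxx'; omega
    have hT' : G.IsVertexCover ↑(insert x' (T.erase x)) :=
      hT.1.of_erase_subset (subset_insert _ _) fun w hw => by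
        rcases eq_or_eq_of_adj_of_maxDegree_le_two hΔ (ne_of_mem_of_not_mem hy hx'T) hxy hxx' hw
          with rfl | rfl
        · exact mem_insert_of_mem (mem_erase.mpr ⟨G.ne_of_adj hxy.symm, hy⟩)
        · exact mem_insert_self _ _
    have hx'T' : x' ∉ T.erase x := fun h => hx'T (mem_of_mem_erase h)
    have hcard := hmax _ ⟨hT', by rw [card_insert_of_notMem hx'T', card_erase_add_one hx, hT.2]⟩
    rw [filter_insert, if_pos hx'1, filter_erase, erase_eq_of_notMem (by simp [hx1]),
      card_insert_of_notMem (by simp [hx'T])] at hcard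
    omega
  refine ⟨T, fun x hx y hy _ hxy => ?_, hT⟩
  exact C.valid hxy ((key x hx y hy hxy).trans (key y hy x hx hxy.symm).symm)

end SimpleGraph

section Chi

variable {W : Type*} [Fintype W] (H : SimpleGraph W)

lemma chromaticNumber_eq_chi : H.chromaticNumber = chi H :=
  (ENat.natCast_toNat (chromaticNumber_ne_top_iff_exists.mpr ⟨_, H.colorable_of_fintype⟩)).symm

lemma colorable_iff_chi_le {n : ℕ} : H.Colorable n ↔ chi H ≤ n := by
  rw [← chromaticNumber_le_iff_colorable, chromaticNumber_eq_chi, Nat.cast_le]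

lemma chi_eq_zero_iff : chi H = 0 ↔ IsEmpty W := by
  rw [← chromaticNumber_eq_zero_iff, chromaticNumber_eq_chi, Nat.cast_eq_zero]

lemma chi_eq_one_iff : chi H = 1 ↔ H = ⊥ ∧ Nonempty W := by
  rw [← chromaticNumber_eq_one_iff, chromaticNumber_eq_chi, Nat.cast_eq_one]

end Chi

section Stability

variable {V : Type*} [Fintype V] [DecidableEq V] (G : SimpleGraph V)

lemma chi_le_chi_induce_compl_add_one {S : Finset V} (hS : G.IsIndepSet ↑S) :
    chi G ≤ chi (G.induce ↑Sᶜ) + 1 := by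
  obtain ⟨C⟩ := (colorable_iff_chi_le (G.induce ↑Sᶜ)).mpr le_rfl
  let C' : G.Coloring (Option (Fin _)) := Coloring.mk
    (fun v => if h : v ∈ S then none else some (C ⟨v, by simpa using h⟩)) fun {u v} huv => by
      by_cases hu : u ∈ S <;> by_cases hv : v ∈ S <;> simp only [hu, hv, dite_true, dite_false,
        ne_eq, reduceCtorEq, not_true_eq_false, not_false_eq_true, Option.some.injEq]
      · exact hS hu hv (G.ne_of_adj huv) huv
      · exact C.valid (G := G.induce _) huv
  simpa [colorable_iff_chi_le] using C'.colorable

lemma chi_induce_compl_eq_one_iff {S : Finset V} :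
    chi (G.induce ↑Sᶜ) = 1 ↔ S ≠ univ ∧ G.IsVertexCover ↑S := by
  rw [chi_eq_one_iff, induce_eq_bot_iff, coe_compl, isIndepSet_compl_iff_isVertexCover, and_comm]
  simp [eq_univ_iff_forall]

lemma exists_isIndepSet_chi_induce_compl_eq [Nonempty V] :
    ∃ S : Finset V, G.IsIndepSet ↑S ∧ chi (G.induce ↑Sᶜ) = chi G - 1 ∧
      #S * chi G ≤ Fintype.card V := by
  obtain ⟨m, hm⟩ : ∃ m, chi G = m + 1 :=
    Nat.exists_eq_succ_of_ne_zero ((chi_eq_zero_iff G).not.mpr (not_isEmpty_of_nonempty V))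
  obtain ⟨C⟩ := (colorable_iff_chi_le G).mpr hm.le
  obtain ⟨i, hi⟩ := Fintype.exists_card_fiber_lt_of_card_lt_mul (f := C)
    (n := Fintype.card V / (m + 1) + 1) (by simpa using Nat.lt_mul_div_succ _ m.succ_pos)
  set S : Finset V := {v | C v = i}
  have hS : G.IsIndepSet ↑S := fun u hu v hv _ huv => C.valid huv (by simp_all [S])
  have hle : chi (G.induce ↑Sᶜ) ≤ m := by
    let C' : (G.induce ↑Sᶜ).Coloring {j // j ≠ i} :=
      Coloring.mk (fun v => ⟨C v, by simpa [S] using v.2⟩)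
        fun huv h => C.valid huv (congrArg Subtype.val h)
    simpa [← colorable_iff_chi_le, Fintype.card_subtype_compl] using C'.colorable
  refine ⟨S, hS, by have := chi_le_chi_induce_compl_add_one G hS; omega, ?_⟩
  calc #S * chi G ≤ Fintype.card V / (m + 1) * (m + 1) := by rw [hm]; gcongr; omega
    _ ≤ Fintype.card V := Nat.div_mul_le_self _ _

lemma ivsChi_le {S : Finset V} (hS : G.IsIndepSet ↑S)
    (h : chi (G.induce ↑Sᶜ) = chi G - 1) : ivsChi G ≤ #S :=
  Nat.sInf_le ⟨S, rfl, fun _ hx _ hy hxy => hS hx hy (G.ne_of_adj hxy) hxy, h⟩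

lemma vsChi_le {S : Finset V} (h : chi (G.induce ↑Sᶜ) = chi G - 1) : vsChi G ≤ #S :=
  Nat.sInf_le ⟨S, rfl, h⟩

lemma ivsChi_mul_chi_le_card [Nonempty V] : ivsChi G * chi G ≤ Fintype.card V := by
  obtain ⟨S, hS, hχ, hcard⟩ := exists_isIndepSet_chi_induce_compl_eq G
  exact (Nat.mul_le_mul_right _ (ivsChi_le G hS hχ)).trans hcard

lemma exists_card_eq_vsChi [Nonempty V] :
    ∃ S : Finset V, #S = vsChi G ∧ chi (G.induce ↑Sᶜ) = chi G - 1 := by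
  obtain ⟨S, -, hχ, -⟩ := exists_isIndepSet_chi_induce_compl_eq G
  exact Nat.sInf_mem (s := {n | ∃ S : Finset V, #S = n ∧ chi (G.induce ↑Sᶜ) = chi G - 1})
    ⟨#S, S, rfl, hχ⟩

lemma ivsChi_le_vsChi_of_vsChi_le_one [Nonempty V] (h : vsChi G ≤ 1) :
    ivsChi G ≤ vsChi G := by
  obtain ⟨S, hcard, hχ⟩ := exists_card_eq_vsChi G
  have hS : G.IsIndepSet ↑S := fun x hx y hy hxy =>
    absurd (card_le_one.mp (hcard ▸ h) x hx y hy) hxy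
  exact hcard ▸ ivsChi_le G hS hχ

lemma ivsChi_eq_vsChi_of_chi_le_one (h : chi G ≤ 1) : ivsChi G = vsChi G := by
  have hbot : G = ⊥ := colorable_one_iff.mp ((colorable_iff_chi_le G).mpr h)
  have hadj : ∀ x y, ¬ G.Adj x y := by simp [hbot]
  simp only [ivsChi, vsChi, hadj, not_false_eq_true, implies_true, true_and]


lemma ivsChi_le_vsChi_of_chi_eq_two (hχ : chi G = 2) (hΔ : maxDeg G ≤ 2) :
    ivsChi G ≤ vsChi G := by
  have hχ1 : chi G - 1 = 1 := by omega
  have : Nonempty V := not_isEmpty_iff.mp fun h => by have := (chi_eq_zero_iff G).mpr h; omega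
  obtain ⟨S, hcard, hSχ⟩ := exists_card_eq_vsChi G
  rw [hχ1, chi_induce_compl_eq_one_iff] at hSχ
  have hmin : ∀ T : Finset V, G.IsVertexCover ↑T → #S ≤ #T := by
    intro T hT
    by_contra! hlt
    have hTuniv : T ≠ univ := by
      rintro rfl
      rw [card_univ] at hlt
      exact absurd (card_le_univ S) (not_le.mpr hlt)
    have := vsChi_le G (S := T) (by rw [hχ1, chi_induce_compl_eq_one_iff]; exact ⟨hTuniv, hT⟩)
    omega
  let := Classical.decRel G.Adj
  obtain ⟨T, hTind, hT, hTcard⟩ := exists_isIndepSet_isVertexCover_card_eq hΔ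
    ((colorable_iff_chi_le G).mpr hχ.le) hSχ.2 hmin
  have hTuniv : T ≠ univ := by
    rintro rfl
    exact hSχ.1 (eq_univ_of_card S (hTcard ▸ card_univ))
  have := ivsChi_le G hTind (by rw [hχ1, chi_induce_compl_eq_one_iff]; exact ⟨hTuniv, hT⟩)
  omega

end Stability

/-- If `ivs_χ(G) > vs_χ(G)`, `2χ(G) ≥ Δ(G) + 2` and `|V(G)| = 9`, then `ivs_χ(G) = 3`,
`vs_χ(G) = 2` and `χ(G) = 3`. -/
theorem stmt_5 {V : Type*} [Fintype V] [DecidableEq V] (G : SimpleGraph V)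
    (h1 : ivsChi G > vsChi G) (h2 : 2 * chi G ≥ maxDeg G + 2)
    (h3 : Fintype.card V = 9) :
    ivsChi G = 3 ∧ vsChi G = 2 ∧ chi G = 3 := by
  have : Nonempty V := Fintype.card_pos_iff.mp (by omega)
  have hvs : 2 ≤ vsChi G := by
    by_contra! h
    have := ivsChi_le_vsChi_of_vsChi_le_one G (by omega)
    omega
  have hmul := ivsChi_mul_chi_le_card G
  have hχ0 : chi G ≠ 0 := (chi_eq_zero_iff G).not.mpr (not_isEmpty_of_nonempty V)
  have hχ : chi G = 3 := by
    have : chi G ≤ 3 := by nlinarith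
    obtain h | h | h : chi G = 1 ∨ chi G = 2 ∨ chi G = 3 := by omega
    · exact absurd (ivsChi_eq_vsChi_of_chi_le_one G h.le) (by omega)
    · exact absurd (ivsChi_le_vsChi_of_chi_eq_two G h (by omega)) (by omega)
    · exact h
  rw [hχ, h3] at hmul
  omega
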